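/- Fix γ > 0 and define g_∞(r) = (π²/(2¹¹·27·γ⁵))^{1/3}·|r|^{−8/3} for r ≠ 0. Then for every r ≠ 0, lim_{B→+∞} B^{1/3}·g_{B,+}(r) = 0 and lim_{B→+∞} B^{1/3}·g_{B,−}(r) = g_∞(r). Moreover g_∞ is the density of a Lévy measure on ℝ \ {0}, i.e. ∫_{ℝ \ {0}} min(1, r²)·g_∞(r) dr < ∞. -/

import Mathlib

/-!
With `S(t) = √(t² + B²/4)` and `F(t) = (2S(t) + εB) t`, the function `F` is strictly increasing
and `x_{B,ε}(r) = F⁻¹(π/(γr))`. The fundamental theorem of calculus and the inverse function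
theorem give, for both signs of `r`, the closed form
`g_{B,ε}(r) = x² / (8γr² (4S(x) − εB))` with `x = x_{B,ε}(r)`.

For `ε = +1`, `(2S + B)|x| = |a|` with `a = π/(γr)` forces `|x| ≤ |a|/(2B)`, so
`g_{B,+}(r) = O(B⁻³)`. For `ε = −1`, multiplying `(2S − B)x = a` by `2S + B` gives
`4x³ = a(2S + B)`; hence `x³/B → a/2`, `x²/B^{2/3} → (a²/4)^{1/3}` and `4S + B ~ 3B`, so
`B^{1/3} g_{B,−}(r) → (a²/4)^{1/3} / (24γr²)`, which is `g_∞(r)`.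
Finally `min(1, r²)|r|^{-8/3}` is integrable: it behaves like `|r|^{-2/3}` near `0` and like
`|r|^{-8/3}` at infinity.
-/

open Filter Topology MeasureTheory Set Real

theorem HasStrictDerivAt.hasDerivAt_of_apply_eventuallyEq {F X φ : ℝ → ℝ} {F' φ' r : ℝ}
    (hF : HasStrictDerivAt F F' (X r)) (hF' : F' ≠ 0) (hinj : Function.Injective F)
    (hφ : HasDerivAt φ φ' r) (hX : ∀ᶠ y in 𝓝 r, F (X y) = φ y) :
    HasDerivAt X (φ' / F') r := by
  have hXr : F (X r) = φ r := hX.self_of_nhds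
  set L := hF.localInverse F F' (X r) hF'
  have hL : HasDerivAt L F'⁻¹ (φ r) := hXr ▸ (hF.to_localInverse hF').hasDerivAt
  have hright : ∀ᶠ y in 𝓝 r, F (L (φ y)) = φ y :=
    hφ.continuousAt.tendsto.eventually (hXr ▸ hF.eventually_right_inverse hF')
  have hloc : X =ᶠ[𝓝 r] L ∘ φ :=
    (hX.and hright).mono fun y hy => hinj (hy.1.trans hy.2.symm)
  rw [div_eq_inv_mul]
  exact (hL.comp r hφ).congr_of_eventuallyEq hloc

theorem signed_deriv_intervalIntegral {f X h : ℝ → ℝ} {X' r : ℝ} (k : ℝ)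
    (hf : Continuous f) (hX : HasDerivAt X X' r) (hr : r ≠ 0)
    (hh : ∀ y ≠ 0, h y = k *
      if 0 < y then ∫ t in (0 : ℝ)..X y, f t else ∫ t in X y..0, f t) :
    (if 0 < r then -deriv h r else deriv h r) = -(k * (f (X r) * X')) := by
  have hH : HasDerivAt (fun y => ∫ t in (0 : ℝ)..X y, f t) (f (X r) * X') r :=
    (hf.integral_hasStrictDerivAt 0 (X r)).hasDerivAt.comp r hX
  rcases hr.lt_or_gt with hneg | hpos
  · have heq : h =ᶠ[𝓝 r] fun y => k * -∫ t in (0 : ℝ)..X y, f t := by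
      filter_upwards [eventually_lt_nhds hneg] with y hy
      rw [hh y hy.ne, if_neg hy.not_gt, intervalIntegral.integral_symm]
    rw [if_neg hneg.not_gt, ((hH.neg.const_mul k).congr_of_eventuallyEq heq).deriv]
    ring
  · have heq : h =ᶠ[𝓝 r] fun y => k * ∫ t in (0 : ℝ)..X y, f t := by
      filter_upwards [eventually_gt_nhds hpos] with y hy
      rw [hh y hy.ne', if_pos hy]
    rw [if_pos hpos, ((hH.const_mul k).congr_of_eventuallyEq heq).deriv]

theorem tendsto_sq_div_rpow_of_tendsto_cube_div {X : ℝ → ℝ} {c : ℝ}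
    (h : Tendsto (fun B => X B ^ 3 / B) atTop (𝓝 c)) :
    Tendsto (fun B => X B ^ 2 / B ^ ((2 : ℝ) / 3)) atTop (𝓝 ((c ^ 2) ^ ((1 : ℝ) / 3))) := by
  have hcont : Continuous fun y : ℝ => (y ^ 2) ^ ((1 : ℝ) / 3) :=
    (continuous_pow 2).rpow_const fun _ => Or.inr (by norm_num)
  refine (hcont.tendsto c |>.comp h).congr' ?_
  filter_upwards [eventually_gt_atTop 0] with B hB
  have hpow : (B ^ ((2 : ℝ) / 3)) ^ 3 = B ^ 2 := by
    rw [← rpow_natCast, ← rpow_mul hB.le]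
    norm_num
  have hcube : (X B ^ 3 / B) ^ 2 = (X B ^ 2 / B ^ ((2 : ℝ) / 3)) ^ 3 := by
    rw [div_pow, div_pow, hpow]
    ring
  simp only [Function.comp_apply, hcube, one_div]
  exact pow_rpow_inv_natCast (by positivity) three_ne_zero

theorem lintegral_min_one_sq_mul_abs_rpow_lt_top {p : ℝ} (hp₁ : 1 < p) (hp₃ : p < 3)
    (C : ℝ) :
    ∫⁻ r in ({0}ᶜ : Set ℝ), ENNReal.ofReal (min 1 (r ^ 2) * (C * |r| ^ (-p))) < ⊤ := by
  set φ : ℝ → ℝ := fun r => min 1 (r ^ 2) * |r| ^ (-p)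
  have hφm : AEStronglyMeasurable φ := by fun_prop
  have hφ0 : ∀ r, 0 ≤ φ r := fun r => by positivity
  have hnear : IntegrableOn φ (Ioc 0 1) := by
    have hint : IntegrableOn (fun r : ℝ => r ^ (2 - p)) (Ioc 0 1) := by
      have := intervalIntegral.intervalIntegrable_rpow' (a := 0) (b := 1)
        (by linarith : -1 < 2 - p)
      rwa [intervalIntegrable_iff_integrableOn_Ioc_of_le zero_le_one] at this
    refine hint.mono' hφm.restrict ((ae_restrict_mem measurableSet_Ioc).mono fun r hr => ?_)
    rw [norm_of_nonneg (hφ0 r)]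
    dsimp only [φ]
    rw [abs_of_pos hr.1, rpow_sub hr.1, rpow_neg hr.1.le, rpow_two, div_eq_mul_inv]
    exact mul_le_mul_of_nonneg_right (min_le_right _ _) (inv_nonneg.2 (rpow_nonneg hr.1.le _))
  have hfar : IntegrableOn φ (Ioi 1) := by
    refine (integrableOn_Ioi_rpow_of_lt (by linarith : -p < -1) one_pos).mono' hφm.restrict
      ((ae_restrict_mem measurableSet_Ioi).mono fun r hr => ?_)
    rw [norm_of_nonneg (hφ0 r)]
    dsimp only [φ]
    rw [abs_of_pos (zero_lt_one.trans (mem_Ioi.1 hr))]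
    exact mul_le_of_le_one_left (rpow_nonneg (zero_le_one.trans (le_of_lt hr)) _) (min_le_left _ _)
  have hpos : IntegrableOn φ (Ioi 0) := by
    rw [← Ioc_union_Ioi_eq_Ioi zero_le_one]
    exact hnear.union hfar
  have hneg : IntegrableOn φ (Iio 0) := by
    have heven : (fun r => φ (-r)) = φ :=
      funext fun r => by simp only [φ, even_two.neg_pow, abs_neg]
    have := (neg_zero (G := ℝ) ▸ hpos).comp_neg_Iio
    rwa [heven] at this
  have hφC : IntegrableOn (fun r => C * φ r) ({0}ᶜ) := by
    rw [← Iio_union_Ioi]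
    exact (hneg.union hpos).const_mul C
  simpa only [φ, mul_left_comm] using hφC.lintegral_lt_top

namespace LevyDensity

variable {B ε : ℝ}

-- `x_{B,ε}(r)` solves `dispersion B ε x = π/(γr)`, and `h_{B,ε}` integrates `density B ε`.
noncomputable def root (B t : ℝ) : ℝ := √(t ^ 2 + B ^ 2 / 4)

noncomputable def dispersion (B ε t : ℝ) : ℝ := (2 * root B t + ε * B) * t

noncomputable def density (B ε t : ℝ) : ℝ := (1 / 2 + ε * B / (4 * root B t)) * t ^ 2

lemma root_sq (B t : ℝ) : root B t ^ 2 = t ^ 2 + B ^ 2 / 4 := sq_sqrt (by positivity)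

lemma root_nonneg (B t : ℝ) : 0 ≤ root B t := sqrt_nonneg _

lemma abs_le_two_root (B t : ℝ) : |B| ≤ 2 * root B t :=
  abs_le_of_sq_le_sq (by nlinarith [root_sq B t, sq_nonneg t]) (by linarith [root_nonneg B t])

lemma abs_lt_two_root (B : ℝ) {t : ℝ} (ht : t ≠ 0) : |B| < 2 * root B t :=
  abs_lt_of_sq_lt_sq (by nlinarith [root_sq B t, pow_pos (abs_pos.2 ht) 2, sq_abs t])
    (by linarith [root_nonneg B t])

lemma root_pos (hB : B ≠ 0) (t : ℝ) : 0 < root B t := by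
  linarith [abs_le_two_root B t, abs_pos.2 hB]

lemma continuous_root (B : ℝ) : Continuous (root B) := by
  unfold root; fun_prop

lemma hasStrictDerivAt_root (hB : B ≠ 0) (t : ℝ) :
    HasStrictDerivAt (root B) (t / root B t) t := by
  have hpos : 0 < t ^ 2 + B ^ 2 / 4 := by positivity
  have h := ((hasStrictDerivAt_pow 2 t).add_const (B ^ 2 / 4)).sqrt hpos.ne'
  convert h using 1
  · rfl
  · change t / √(t ^ 2 + B ^ 2 / 4) = _
    field_simp
    norm_num [mul_comm]

lemma two_root_add_pos (hε : |ε| = 1) {t : ℝ} (ht : t ≠ 0) : 0 < 2 * root B t + ε * B := by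
  have := neg_abs_le (ε * B)
  rw [abs_mul, hε, one_mul] at this
  linarith [abs_lt_two_root B ht]

lemma four_root_sub_pos (hB : B ≠ 0) (hε : |ε| = 1) (t : ℝ) : 0 < 4 * root B t - ε * B := by
  have := le_abs_self (ε * B)
  rw [abs_mul, hε, one_mul] at this
  linarith [abs_le_two_root B t, root_pos hB t]

lemma hasStrictDerivAt_dispersion (hB : B ≠ 0) (hε : |ε| = 1) (t : ℝ) :
    HasStrictDerivAt (dispersion B ε)
      ((2 * root B t + ε * B) * (4 * root B t - ε * B) / (2 * root B t)) t := by
  have hε2 : ε ^ 2 = 1 := by rw [← sq_abs, hε, one_pow]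
  have hS := (root_pos hB t).ne'
  refine ((((hasStrictDerivAt_root hB t).const_mul 2).add_const (ε * B)).mul
    (hasStrictDerivAt_id t)).congr_deriv ?_
  rw [id]
  field_simp
  linear_combination B ^ 2 * hε2 - 4 * root_sq B t

lemma dispersion_deriv_pos (hB : B ≠ 0) (hε : |ε| = 1) {t : ℝ} (ht : t ≠ 0) :
    0 < (2 * root B t + ε * B) * (4 * root B t - ε * B) / (2 * root B t) := by
  have := two_root_add_pos (B := B) hε ht
  have := four_root_sub_pos hB hε t
  have := root_pos hB t
  positivity

lemma strictMono_dispersion (hB : B ≠ 0) (hε : |ε| = 1) : StrictMono (dispersion B ε) := by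
  have hd t := (hasStrictDerivAt_dispersion hB hε t).hasDerivAt
  have hcont : ContinuousOn (dispersion B ε) univ :=
    (continuous_iff_continuousAt.2 fun t => (hd t).continuousAt).continuousOn
  have hpos : ∀ t ≠ 0, 0 < deriv (dispersion B ε) t := fun t ht =>
    (hd t).deriv ▸ dispersion_deriv_pos hB hε ht
  -- `F'(0) = 0` when `ε = -1`, so monotonicity is proved on each side of `0`.
  refine StrictMonoOn.Iic_union_Ici (a := 0) ?_ ?_
  · refine strictMonoOn_of_deriv_pos (convex_Iic 0) (hcont.mono (subset_univ _)) fun t ht => ?_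
    rw [interior_Iic] at ht
    exact hpos t ht.ne
  · refine strictMonoOn_of_deriv_pos (convex_Ici 0) (hcont.mono (subset_univ _)) fun t ht => ?_
    rw [interior_Ici] at ht
    exact hpos t ht.ne'

lemma continuous_density (hB : B ≠ 0) (ε : ℝ) : Continuous (density B ε) := by
  have := continuous_root B
  unfold density
  fun_prop (disch := exact fun t => (mul_pos four_pos (root_pos hB t)).ne')

theorem signed_deriv_eq_sq_div {γ : ℝ} (hγ : γ ≠ 0) (hB : B ≠ 0) (hε : |ε| = 1)
    {X h : ℝ → ℝ}
    (hX : ∀ y ≠ 0, dispersion B ε (X y) = π / (γ * y))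
    (hh : ∀ y ≠ 0, h y = 1 / (4 * π) * if 0 < y then ∫ t in (0 : ℝ)..X y, density B ε t
      else ∫ t in X y..0, density B ε t)
    {r : ℝ} (hr : r ≠ 0) :
    (if 0 < r then -deriv h r else deriv h r) =
      X r ^ 2 / (8 * γ * r ^ 2 * (4 * root B (X r) - ε * B)) := by
  have hXr : X r ≠ 0 := by
    intro h0
    have := hX r hr
    rw [h0, dispersion, mul_zero] at this
    exact div_ne_zero pi_ne_zero (mul_ne_zero hγ hr) this.symm
  have hφ : HasDerivAt (fun y => π / (γ * y)) (-(π / γ) / r ^ 2) r := by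
    have hinv := (hasDerivAt_inv hr).const_mul (π / γ)
    rw [show (fun y : ℝ => π / γ * y⁻¹) = fun y => π / (γ * y) by funext y; ring] at hinv
    exact hinv.congr_deriv (by ring)
  have hXd := (hasStrictDerivAt_dispersion hB hε (X r)).hasDerivAt_of_apply_eventuallyEq
    (dispersion_deriv_pos hB hε hXr).ne' (strictMono_dispersion hB hε).injective hφ
    ((eventually_ne_nhds hr).mono hX)
  rw [signed_deriv_intervalIntegral _ (continuous_density hB ε) hXd hr hh]
  have := two_root_add_pos (B := B) hε hXr
  have := four_root_sub_pos hB hε (X r)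
  have := root_pos hB (X r)
  -- `density = (2S + εB) t² / (4S)` and `F' = (2S + εB)(4S − εB) / (2S)`: `2S + εB` cancels.
  unfold density
  field_simp
  ring

theorem tendsto_rpow_mul_of_dispersion_one {a : ℝ} {X : ℝ → ℝ}
    (hX : ∀ B > 0, dispersion B 1 (X B) = a) :
    Tendsto (fun B => B ^ ((1 : ℝ) / 3) * (X B ^ 2 / (4 * root B (X B) - B))) atTop (𝓝 0) := by
  have hbound : ∀ᶠ B in atTop,
      B ^ ((1 : ℝ) / 3) * (X B ^ 2 / (4 * root B (X B) - B)) ≤ a ^ 2 / 4 / B ^ 2 := by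
    filter_upwards [eventually_ge_atTop 1] with B hB
    have hB0 : 0 < B := zero_lt_one.trans_le hB
    have hS := abs_le_two_root B (X B)
    rw [abs_of_pos hB0] at hS
    have hsq : X B ^ 2 * (4 * B ^ 2) ≤ a ^ 2 := by
      rw [← hX B hB0, dispersion]
      nlinarith [sq_nonneg (X B),
        mul_nonneg (sq_nonneg (X B)) (by linarith : 0 ≤ 2 * root B (X B) - B)]
    calc B ^ ((1 : ℝ) / 3) * (X B ^ 2 / (4 * root B (X B) - B))
        ≤ B * (X B ^ 2 / B) :=
          mul_le_mul (rpow_le_self_of_one_le hB (by norm_num))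
            (div_le_div_of_nonneg_left (sq_nonneg _) hB0 (by linarith))
            (div_nonneg (sq_nonneg _) (by linarith)) hB0.le
      _ = X B ^ 2 := by field_simp
      _ ≤ a ^ 2 / 4 / B ^ 2 := by rw [div_div, le_div_iff₀ (by positivity)]; linarith
  refine squeeze_zero' ?_ hbound (tendsto_const_nhds.div_atTop (tendsto_pow_atTop two_ne_zero))
  filter_upwards [eventually_gt_atTop 0] with B hB
  have hS := abs_le_two_root B (X B)
  rw [abs_of_pos hB] at hS
  have : 0 < 4 * root B (X B) - B := by linarith
  positivity

lemma four_cube_eq_of_dispersion_neg_one {a X : ℝ} (hX : dispersion B (-1) X = a) :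
    4 * X ^ 3 = a * (2 * root B X + B) := by
  rw [← hX, dispersion]
  linear_combination (-4 * X) * root_sq B X

theorem tendsto_cube_div_of_dispersion_neg_one {a : ℝ} (ha : a ≠ 0) {X : ℝ → ℝ}
    (hX : ∀ B > 0, dispersion B (-1) (X B) = a) :
    Tendsto (fun B => X B ^ 3 / B) atTop (𝓝 (a / 2)) := by
  have hdist : ∀ᶠ B in atTop, |X B ^ 3 / B - a / 2| ≤ a ^ 2 / 4 / B := by
    filter_upwards [eventually_ge_atTop (4 / |a|), eventually_gt_atTop 0] with B hBa hB
    have hcube := four_cube_eq_of_dispersion_neg_one (hX B hB)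
    have hdisp := hX B hB
    rw [dispersion] at hdisp
    have hX0 : X B ≠ 0 := by
      rintro h0
      rw [h0, mul_zero] at hdisp
      exact ha hdisp.symm
    -- `4|x|³ = |a|(2S + B) ≥ |a|B ≥ 4`
    have hone : 1 ≤ |X B| := by
      have habs := congrArg abs hcube
      rw [abs_mul, abs_mul, abs_pow, abs_of_pos (by positivity : (0 : ℝ) < 4),
        abs_of_pos (by linarith [root_nonneg B (X B)] : 0 < 2 * root B (X B) + B)] at habs
      rw [div_le_iff₀ (abs_pos.2 ha)] at hBa
      refine (one_le_pow_iff_of_nonneg (abs_nonneg _) three_ne_zero).1 ?_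
      nlinarith [root_nonneg B (X B), abs_nonneg a]
    -- equivalently `4x⁴ = a² + 2aBx`
    have hid : X B ^ 3 / B - a / 2 = a ^ 2 / (4 * B * X B) := by
      field_simp
      linear_combination 2 * X B * hcube + 2 * a * hdisp
    rw [hid, abs_div, abs_mul, abs_of_pos (by positivity : (0 : ℝ) < 4 * B), abs_sq, div_div]
    exact div_le_div_of_nonneg_left (sq_nonneg a) (by positivity)
      (le_mul_of_one_le_right (by positivity) hone)
  have hlim : Tendsto (fun B : ℝ => a ^ 2 / 4 / B) atTop (𝓝 0) :=
    tendsto_const_nhds.div_atTop tendsto_id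
  rw [tendsto_iff_norm_sub_tendsto_zero]
  exact squeeze_zero' (Eventually.of_forall fun B => norm_nonneg _)
    (by simpa only [Real.norm_eq_abs] using hdist) hlim

theorem tendsto_rpow_mul_of_dispersion_neg_one {a : ℝ} (ha : a ≠ 0) {X : ℝ → ℝ}
    (hX : ∀ B > 0, dispersion B (-1) (X B) = a) :
    Tendsto (fun B => B ^ ((1 : ℝ) / 3) * (X B ^ 2 / (4 * root B (X B) + B))) atTop
      (𝓝 (((a / 2) ^ 2) ^ ((1 : ℝ) / 3) / 3)) := by
  have hw := tendsto_cube_div_of_dispersion_neg_one ha hX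
  have hden : Tendsto (fun B => 8 * (X B ^ 3 / B) / a - 1) atTop (𝓝 3) := by
    convert ((hw.const_mul 8).div_const a).sub_const 1 using 2
    field_simp
    norm_num
  refine ((tendsto_sq_div_rpow_of_tendsto_cube_div hw).div hden three_ne_zero).congr' ?_
  filter_upwards [eventually_gt_atTop 0] with B hB
  have hcube := four_cube_eq_of_dispersion_neg_one (hX B hB)
  have hsplit : B ^ ((1 : ℝ) / 3) * B ^ ((2 : ℝ) / 3) = B := by
    rw [← rpow_add hB]
    norm_num
  have hden_eq : 4 * root B (X B) + B = B * (8 * (X B ^ 3 / B) / a - 1) := by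
    field_simp
    linear_combination -2 * hcube
  have hpos : 0 < 4 * root B (X B) + B := by linarith [root_nonneg B (X B)]
  have h13 : 0 < B ^ ((1 : ℝ) / 3) := rpow_pos_of_pos hB _
  have h23 : 0 < B ^ ((2 : ℝ) / 3) := rpow_pos_of_pos hB _
  have hd : 8 * (X B ^ 3 / B) / a - 1 ≠ 0 := by
    intro h0
    rw [h0, mul_zero] at hden_eq
    linarith
  have hB_eq : B * (8 * (X B ^ 3 / B) / a - 1) =
      B ^ ((1 : ℝ) / 3) * (B ^ ((2 : ℝ) / 3) * (8 * (X B ^ 3 / B) / a - 1)) := by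
    rw [← mul_assoc, hsplit]
  simp only [Pi.div_apply]
  rw [hden_eq, hB_eq]
  field_simp

lemma limit_neg_one_eq {γ r : ℝ} (hγ : 0 < γ) (hr : r ≠ 0) :
    ((π / (γ * r) / 2) ^ 2) ^ ((1 : ℝ) / 3) / 3 / (8 * γ * r ^ 2) =
      (π ^ 2 / (2 ^ 11 * 27 * γ ^ 5)) ^ ((1 : ℝ) / 3) * |r| ^ (-(8 / 3 : ℝ)) := by
  have hcube : ∀ y : ℝ, 0 ≤ y → (y ^ ((1 : ℝ) / 3)) ^ 3 = y := fun y hy => by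
    rw [one_div]
    exact rpow_inv_natCast_pow hy three_ne_zero
  have hr8 : (|r| ^ (-(8 / 3 : ℝ))) ^ 3 = (r ^ 8)⁻¹ := by
    rw [← rpow_natCast, ← rpow_mul (abs_nonneg r),
      show -(8 / 3 : ℝ) * (3 : ℕ) = -((8 : ℕ) : ℝ) by norm_num, rpow_neg (abs_nonneg r),
      rpow_natCast, pow_abs, abs_of_nonneg (by positivity)]
  refine (pow_left_inj₀ (by positivity) (by positivity) three_ne_zero).1 ?_
  rw [mul_pow, hr8, div_pow, div_pow, hcube _ (by positivity), hcube _ (by positivity)]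
  field_simp
  ring

end LevyDensity

open LevyDensity in
theorem stmt_8 (γ : ℝ) (hγ : 0 < γ)
    (x h g : ℝ → ℝ → ℝ → ℝ)
    (hx : ∀ B : ℝ, 0 < B → ∀ ε : ℝ, (ε = 1 ∨ ε = -1) → ∀ r : ℝ, r ≠ 0 →
      (2 * Real.sqrt (x B ε r ^ 2 + B ^ 2 / 4) + ε * B) * x B ε r = Real.pi / (γ * r))
    (hh : ∀ B : ℝ, 0 < B → ∀ ε : ℝ, (ε = 1 ∨ ε = -1) → ∀ r : ℝ, r ≠ 0 →
      h B ε r = (1 / (4 * Real.pi)) *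
        (if 0 < r then
          ∫ t in (0 : ℝ)..(x B ε r),
            (1 / 2 + ε * B / (4 * Real.sqrt (t ^ 2 + B ^ 2 / 4))) * t ^ 2
         else
          ∫ t in (x B ε r)..(0 : ℝ),
            (1 / 2 + ε * B / (4 * Real.sqrt (t ^ 2 + B ^ 2 / 4))) * t ^ 2))
    (hg : ∀ B : ℝ, 0 < B → ∀ ε : ℝ, (ε = 1 ∨ ε = -1) → ∀ r : ℝ, r ≠ 0 →
      g B ε r = if 0 < r then -(deriv (h B ε) r) else deriv (h B ε) r) :
    (∀ r : ℝ, r ≠ 0 →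
      Tendsto (fun B => B ^ ((1 : ℝ) / 3) * g B 1 r) atTop (𝓝 0)) ∧
    (∀ r : ℝ, r ≠ 0 →
      Tendsto (fun B => B ^ ((1 : ℝ) / 3) * g B (-1) r) atTop
        (𝓝 ((Real.pi ^ 2 / (2 ^ 11 * 27 * γ ^ 5)) ^ ((1 : ℝ) / 3) * |r| ^ (-(8 / 3 : ℝ))))) ∧
    ∫⁻ r in ({0}ᶜ : Set ℝ),
      ENNReal.ofReal (min 1 (r ^ 2) *
        ((Real.pi ^ 2 / (2 ^ 11 * 27 * γ ^ 5)) ^ ((1 : ℝ) / 3) * |r| ^ (-(8 / 3 : ℝ)))) < ⊤ := by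
  have hg_eq : ∀ ε : ℝ, (ε = 1 ∨ ε = -1) → ∀ r ≠ 0, ∀ B > 0,
      g B ε r = x B ε r ^ 2 / (8 * γ * r ^ 2 * (4 * root B (x B ε r) - ε * B)) := by
    intro ε hε r hr B hB
    have habs : |ε| = 1 := by rcases hε with rfl | rfl <;> simp
    rw [hg B hB ε hε r hr]
    exact signed_deriv_eq_sq_div hγ.ne' hB.ne' habs (hx B hB ε hε) (hh B hB ε hε) hr
  refine ⟨fun r hr => ?_, fun r hr => ?_, lintegral_min_one_sq_mul_abs_rpow_lt_top
    (by norm_num) (by norm_num) _⟩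
  · have hlim := (tendsto_rpow_mul_of_dispersion_one (X := fun B => x B 1 r)
      fun B hB => hx B hB 1 (Or.inl rfl) r hr).div_const (8 * γ * r ^ 2)
    rw [zero_div] at hlim
    refine hlim.congr' ?_
    filter_upwards [eventually_gt_atTop 0] with B hB
    rw [hg_eq 1 (Or.inl rfl) r hr B hB, one_mul, mul_div_assoc, div_div, mul_comm (8 * γ * r ^ 2)]
  · have ha : π / (γ * r) ≠ 0 := div_ne_zero pi_ne_zero (mul_ne_zero hγ.ne' hr)
    have hlim := (tendsto_rpow_mul_of_dispersion_neg_one ha (X := fun B => x B (-1) r)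
      fun B hB => hx B hB (-1) (Or.inr rfl) r hr).div_const (8 * γ * r ^ 2)
    rw [limit_neg_one_eq hγ hr] at hlim
    refine hlim.congr' ?_
    filter_upwards [eventually_gt_atTop 0] with B hB
    rw [hg_eq (-1) (Or.inr rfl) r hr B hB, neg_one_mul, sub_neg_eq_add, mul_div_assoc, div_div,
      mul_comm (8 * γ * r ^ 2)]
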